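/- In the two-point ambiguity model, let 𝐩 > 1 and let 𝐪 satisfy 1/𝐩 + 1/𝐪 = 1 (so 𝐪 > 1). Define h(x) := ((1 − x^𝐪 p^{1−𝐪}) / (1−p)^{1−𝐪})^{1/𝐪} for x ∈ [0, q₁ᵇ], where q₁ᵇ := p^{1/𝐩}. Then sup { G(q₁, q₂) : q₁, q₂ ≥ 0 and (q₁/p)^𝐪 p + (q₂/(1−p))^𝐪 (1−p) ≤ 1 } = sup { G(q₁, h(q₁)) : 0 ≤ q₁ ≤ q₁ᵇ }, and there exists q₁* ∈ [0, q₁ᵇ] such that (q₁*, h(q₁*)) attains the supremum on the left-hand side; in particular, every feasible (q₁, q₂) satisfies q₁ ≤ q₁ᵇ, and at the optimum the constraint holds with equality. -/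

import Mathlib

open MeasureTheory Real

/-- Density of the `N(0, T·I_d)` distribution on `ℝ^d`. -/
noncomputable def gaussDensity (d : ℕ) (T : ℝ) (z : Fin d → ℝ) : ℝ :=
  (2 * π * T) ^ (-(d : ℝ) / 2) * Real.exp (-(∑ i, z i ^ 2) / (2 * T))

/-- Likelihood factor `L_T(ϑ, z) = exp(⟨z, ϑ⟩ - ½‖ϑ‖²T)`. -/
noncomputable def likelihood (d : ℕ) (T : ℝ) (ϑ z : Fin d → ℝ) : ℝ :=
  Real.exp ((∑ i, z i * ϑ i) - (∑ i, ϑ i ^ 2) * T / 2)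

/-- `G(q₁, q₂) = ∫ (q₁ L_T(ϑ̄, z) + q₂ L_T(ϑ̲, z))^γ φ_T(z) dz`. -/
noncomputable def Gfun (d : ℕ) (T γ : ℝ) (ϑb ϑl : Fin d → ℝ) (q₁ q₂ : ℝ) : ℝ :=
  ∫ z : Fin d → ℝ,
    (q₁ * likelihood d T ϑb z + q₂ * likelihood d T ϑl z) ^ γ * gaussDensity d T z

/-- `h(x) = ((1 - x^Q p^{1-Q}) / (1-p)^{1-Q})^{1/Q}`, solving the dual constraint
`(x/p)^Q p + (h(x)/(1-p))^Q (1-p) = 1` for the second coordinate. -/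
noncomputable def hAdj (p Q x : ℝ) : ℝ :=
  ((1 - x ^ Q * p ^ (1 - Q)) / (1 - p) ^ (1 - Q)) ^ (1 / Q)

/-! Both terms `(y / c) ^ Q * c` of the constraint are strictly increasing in `y ≥ 0`, so a
feasible `(q₁, q₂)` has `q₁ ≤ p ^ (1 - 1/Q) = p ^ (1/P)` and `q₂ ≤ h(q₁)`, and the constraint is
tight exactly on the curve `q₂ = h(q₁)`. The feasible set is compact and `G` is continuous
(dominated convergence: the integrand is bounded by `2^γ` times Gaussian integrals of exponentials
of linear forms), so `G` attains its maximum there; as `G` is nondecreasing in `q₂`, moving the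
maximiser up to the curve keeps it a maximiser. -/

lemma continuous_gaussDensity (d : ℕ) (T : ℝ) : Continuous (gaussDensity d T) := by
  unfold gaussDensity; fun_prop

lemma continuous_likelihood (d : ℕ) (T : ℝ) (ϑ : Fin d → ℝ) : Continuous (likelihood d T ϑ) := by
  unfold likelihood; fun_prop

lemma likelihood_pos (d : ℕ) (T : ℝ) (ϑ z : Fin d → ℝ) : 0 < likelihood d T ϑ z :=
  exp_pos _

lemma gaussDensity_nonneg (d : ℕ) {T : ℝ} (hT : 0 ≤ T) (z : Fin d → ℝ) :
    0 ≤ gaussDensity d T z := by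
  unfold gaussDensity; positivity

lemma integrable_exp_inner_mul_gaussDensity (d : ℕ) {T : ℝ} (hT : 0 < T) (v : Fin d → ℝ) :
    Integrable fun z : Fin d → ℝ => exp (∑ i, z i * v i) * gaussDensity d T z := by
  have h := ((GaussianFourier.integrable_cexp_neg_mul_sum_add (b := ((2 * T)⁻¹ : ℂ))
    (by norm_cast; positivity) fun i => (v i : ℂ)).norm).const_mul ((2 * π * T) ^ (-(d : ℝ) / 2))
  refine h.congr (ae_of_all _ fun z => ?_)
  have hre : -(2 * (T : ℂ))⁻¹ * ∑ i, (z i : ℂ) ^ 2 + ∑ i, (v i : ℂ) * z i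
      = ((∑ i, z i * v i - (∑ i, z i ^ 2) / (2 * T) : ℝ) : ℂ) := by
    push_cast; simp only [mul_comm (v _ : ℂ)]; ring
  dsimp only
  rw [hre, Complex.norm_exp, Complex.ofReal_re, gaussDensity, mul_left_comm, ← Real.exp_add]
  ring_nf

lemma integrable_likelihood_rpow_mul_gaussDensity (d : ℕ) {T : ℝ} (hT : 0 < T) (γ : ℝ)
    (ϑ : Fin d → ℝ) :
    Integrable fun z : Fin d → ℝ => likelihood d T ϑ z ^ γ * gaussDensity d T z := by
  refine ((integrable_exp_inner_mul_gaussDensity d hT (γ • ϑ)).const_mul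
    (exp (-((∑ i, ϑ i ^ 2) * T / 2) * γ))).congr (ae_of_all _ fun z => ?_)
  simp only [likelihood, ← Real.exp_mul, Pi.smul_apply, smul_eq_mul]
  have hsum : ∑ i, z i * (γ * ϑ i) = (∑ i, z i * ϑ i) * γ := by
    rw [Finset.sum_mul]; exact Finset.sum_congr rfl fun i _ => by ring
  rw [← mul_assoc, ← Real.exp_add, hsum]
  ring_nf

lemma add_rpow_le_two_rpow_mul_add {a b γ : ℝ} (ha : 0 ≤ a) (hb : 0 ≤ b) (hγ : 0 ≤ γ) :
    (a + b) ^ γ ≤ 2 ^ γ * (a ^ γ + b ^ γ) := by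
  calc (a + b) ^ γ ≤ (2 * max a b) ^ γ := by gcongr; linarith [le_max_left a b, le_max_right a b]
    _ = 2 ^ γ * max a b ^ γ := mul_rpow zero_le_two (le_max_of_le_left ha)
    _ ≤ 2 ^ γ * (a ^ γ + b ^ γ) := by
      gcongr
      rcases le_total a b with h | h
      · rw [max_eq_right h]; linarith [rpow_nonneg ha γ]
      · rw [max_eq_left h]; linarith [rpow_nonneg hb γ]

section Gfun

variable {d : ℕ} {T γ : ℝ} (ϑb ϑl : Fin d → ℝ)

lemma continuous_Gfun_integrand (hγ : 0 ≤ γ) (q₁ q₂ : ℝ) :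
    Continuous fun z : Fin d → ℝ =>
      (q₁ * likelihood d T ϑb z + q₂ * likelihood d T ϑl z) ^ γ * gaussDensity d T z := by
  have := continuous_likelihood d T ϑb
  have := continuous_likelihood d T ϑl
  have := continuous_gaussDensity d T
  exact ((continuous_rpow_const hγ).comp (by fun_prop)).mul (by fun_prop)

lemma integrable_Gfun_integrand (hT : 0 < T) (hγ : 0 ≤ γ) {q₁ q₂ : ℝ} (hq₁ : 0 ≤ q₁)
    (hq₂ : 0 ≤ q₂) :
    Integrable fun z : Fin d → ℝ =>
      (q₁ * likelihood d T ϑb z + q₂ * likelihood d T ϑl z) ^ γ * gaussDensity d T z := by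
  refine (((integrable_likelihood_rpow_mul_gaussDensity d hT γ ϑb).const_mul (q₁ ^ γ)).add
    ((integrable_likelihood_rpow_mul_gaussDensity d hT γ ϑl).const_mul (q₂ ^ γ))).const_mul
    (2 ^ γ) |>.mono' (continuous_Gfun_integrand ϑb ϑl hγ q₁ q₂).aestronglyMeasurable
    (ae_of_all _ fun z => ?_)
  have hLb := (likelihood_pos d T ϑb z).le
  have hLl := (likelihood_pos d T ϑl z).le
  have hφ := gaussDensity_nonneg d hT.le z
  rw [norm_of_nonneg (by positivity)]
  calc _ ≤ 2 ^ γ * ((q₁ * likelihood d T ϑb z) ^ γ + (q₂ * likelihood d T ϑl z) ^ γ)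
        * gaussDensity d T z := by
        gcongr; exact add_rpow_le_two_rpow_mul_add (by positivity) (by positivity) hγ
    _ = _ := by rw [Pi.add_apply, mul_rpow hq₁ hLb, mul_rpow hq₂ hLl]; ring

lemma norm_Gfun_integrand_le (hT : 0 < T) (hγ : 0 ≤ γ) {q₁ q₂ c₁ c₂ : ℝ} (h₁ : |q₁| ≤ c₁)
    (h₂ : |q₂| ≤ c₂) (z : Fin d → ℝ) :
    ‖(q₁ * likelihood d T ϑb z + q₂ * likelihood d T ϑl z) ^ γ * gaussDensity d T z‖ ≤
      (c₁ * likelihood d T ϑb z + c₂ * likelihood d T ϑl z) ^ γ * gaussDensity d T z := by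
  have hLb := likelihood_pos d T ϑb z
  have hLl := likelihood_pos d T ϑl z
  have hφ := gaussDensity_nonneg d hT.le z
  rw [norm_mul, norm_of_nonneg hφ]
  gcongr
  calc ‖(q₁ * likelihood d T ϑb z + q₂ * likelihood d T ϑl z) ^ γ‖
      ≤ |q₁ * likelihood d T ϑb z + q₂ * likelihood d T ϑl z| ^ γ := abs_rpow_le_abs_rpow _ _
    _ ≤ _ := by
      gcongr
      calc _ ≤ |q₁ * likelihood d T ϑb z| + |q₂ * likelihood d T ϑl z| := abs_add_le _ _
        _ ≤ _ := by
          rw [abs_mul, abs_mul, abs_of_pos hLb, abs_of_pos hLl]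
          gcongr

lemma Gfun_mono_right (hT : 0 < T) (hγ : 0 ≤ γ) {q₁ q₂ q₂' : ℝ} (hq₁ : 0 ≤ q₁) (hq₂ : 0 ≤ q₂)
    (h : q₂ ≤ q₂') : Gfun d T γ ϑb ϑl q₁ q₂ ≤ Gfun d T γ ϑb ϑl q₁ q₂' := by
  refine integral_mono (integrable_Gfun_integrand ϑb ϑl hT hγ hq₁ hq₂)
    (integrable_Gfun_integrand ϑb ϑl hT hγ hq₁ (hq₂.trans h)) fun z => ?_
  have hLb := likelihood_pos d T ϑb z
  have hLl := likelihood_pos d T ϑl z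
  have hφ := gaussDensity_nonneg d hT.le z
  dsimp only
  gcongr

lemma continuous_Gfun (hT : 0 < T) (hγ : 0 ≤ γ) :
    Continuous fun q : ℝ × ℝ => Gfun d T γ ϑb ϑl q.1 q.2 := by
  unfold Gfun
  refine continuous_iff_continuousAt.2 fun q₀ => continuousAt_of_dominated
    (bound := fun z => ((|q₀.1| + 1) * likelihood d T ϑb z + (|q₀.2| + 1) * likelihood d T ϑl z)
      ^ γ * gaussDensity d T z)
    (.of_forall fun q => (continuous_Gfun_integrand ϑb ϑl hγ q.1 q.2).aestronglyMeasurable)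
    ?_ (integrable_Gfun_integrand ϑb ϑl hT hγ (by positivity) (by positivity))
    (ae_of_all _ fun z => ?_)
  · filter_upwards [(continuous_fst.abs.continuousAt (x := q₀)).eventually_lt_const
      (lt_add_one _), (continuous_snd.abs.continuousAt (x := q₀)).eventually_lt_const
      (lt_add_one _)] with q h₁ h₂
    exact ae_of_all _ (norm_Gfun_integrand_le ϑb ϑl hT hγ h₁.le h₂.le)
  · have := continuous_rpow_const hγ
    fun_prop

end Gfun

/-- The term of a state of prior probability `c` and adjusted weight `y` in the constraint
`E_π[(q/π)^Q] ≤ 1`. -/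
noncomputable def weightedPow (c Q y : ℝ) : ℝ := (y / c) ^ Q * c

section weightedPow

variable {c Q y y' : ℝ}

lemma weightedPow_nonneg (hc : 0 ≤ c) (hy : 0 ≤ y) : 0 ≤ weightedPow c Q y := by
  unfold weightedPow; positivity

lemma weightedPow_eq (hc : 0 < c) (hy : 0 ≤ y) : weightedPow c Q y = y ^ Q * c ^ (1 - Q) := by
  rw [weightedPow, div_rpow hy hc.le, rpow_sub hc, rpow_one]
  field_simp

lemma continuous_weightedPow (hQ : 0 ≤ Q) : Continuous (weightedPow c Q) :=
  ((continuous_rpow_const hQ).comp (continuous_id.div_const c)).mul continuous_const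

lemma weightedPow_le_weightedPow_iff (hc : 0 < c) (hQ : 0 < Q) (hy : 0 ≤ y) (hy' : 0 ≤ y') :
    weightedPow c Q y ≤ weightedPow c Q y' ↔ y ≤ y' := by
  rw [weightedPow, weightedPow, mul_le_mul_iff_left₀ hc,
    rpow_le_rpow_iff (div_nonneg hy hc.le) (div_nonneg hy' hc.le) hQ,
    div_le_div_iff_of_pos_right hc]

lemma weightedPow_rpow_one_sub_one_div (hc : 0 < c) (hQ : Q ≠ 0) :
    weightedPow c Q (c ^ (1 - 1 / Q)) = 1 := by
  rw [weightedPow_eq hc (rpow_nonneg hc.le _), ← rpow_mul hc.le, ← rpow_add hc]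
  convert rpow_zero c using 2
  field_simp
  ring

lemma weightedPow_le_one_iff (hc : 0 < c) (hQ : 0 < Q) (hy : 0 ≤ y) :
    weightedPow c Q y ≤ 1 ↔ y ≤ c ^ (1 - 1 / Q) := by
  rw [← weightedPow_le_weightedPow_iff hc hQ hy (rpow_nonneg hc.le _),
    weightedPow_rpow_one_sub_one_div hc hQ.ne']

end weightedPow

section hAdj

variable {p Q x : ℝ}

lemma hAdj_eq (hp0 : 0 < p) (hx : 0 ≤ x) :
    hAdj p Q x = ((1 - weightedPow p Q x) / (1 - p) ^ (1 - Q)) ^ (1 / Q) := by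
  rw [hAdj, weightedPow_eq hp0 hx]

lemma hAdj_nonneg (hp0 : 0 < p) (hp1 : p < 1) (hx : 0 ≤ x) (h : weightedPow p Q x ≤ 1) :
    0 ≤ hAdj p Q x := by
  have : 0 < 1 - p := sub_pos.2 hp1
  rw [hAdj_eq hp0 hx]
  exact rpow_nonneg (div_nonneg (sub_nonneg.2 h) (by positivity)) _

lemma weightedPow_hAdj (hp0 : 0 < p) (hp1 : p < 1) (hQ : Q ≠ 0) (hx : 0 ≤ x)
    (h : weightedPow p Q x ≤ 1) : weightedPow (1 - p) Q (hAdj p Q x) = 1 - weightedPow p Q x := by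
  have hp1' : 0 < 1 - p := sub_pos.2 hp1
  have hbase : 0 ≤ (1 - weightedPow p Q x) / (1 - p) ^ (1 - Q) :=
    div_nonneg (sub_nonneg.2 h) (by positivity)
  rw [weightedPow_eq hp1' (hAdj_nonneg hp0 hp1 hx h), hAdj_eq hp0 hx, ← rpow_mul hbase,
    one_div_mul_cancel hQ, rpow_one, div_mul_cancel₀ _ (by positivity)]

lemma weightedPow_add_weightedPow_hAdj (hp0 : 0 < p) (hp1 : p < 1) (hQ : Q ≠ 0) (hx : 0 ≤ x)
    (h : weightedPow p Q x ≤ 1) : weightedPow p Q x + weightedPow (1 - p) Q (hAdj p Q x) = 1 := by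
  rw [weightedPow_hAdj hp0 hp1 hQ hx h]; ring

end hAdj

def feasiblePriors (p Q : ℝ) : Set (ℝ × ℝ) :=
  {q | 0 ≤ q.1 ∧ 0 ≤ q.2 ∧ weightedPow p Q q.1 + weightedPow (1 - p) Q q.2 ≤ 1}

section feasiblePriors

variable {p Q : ℝ}

lemma fst_le_of_mem_feasiblePriors (hp0 : 0 < p) (hp1 : p ≤ 1) (hQ : 0 < Q) {q : ℝ × ℝ}
    (hq : q ∈ feasiblePriors p Q) : q.1 ≤ p ^ (1 - 1 / Q) := by
  obtain ⟨h₁, h₂, h⟩ := hq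
  refine (weightedPow_le_one_iff hp0 hQ h₁).1 ?_
  linarith [weightedPow_nonneg (Q := Q) (sub_nonneg.2 hp1) h₂]

lemma snd_le_of_mem_feasiblePriors (hp0 : 0 ≤ p) (hp1 : p < 1) (hQ : 0 < Q) {q : ℝ × ℝ}
    (hq : q ∈ feasiblePriors p Q) : q.2 ≤ (1 - p) ^ (1 - 1 / Q) := by
  obtain ⟨h₁, h₂, h⟩ := hq
  refine (weightedPow_le_one_iff (sub_pos.2 hp1) hQ h₂).1 ?_
  linarith [weightedPow_nonneg (Q := Q) hp0 h₁]

lemma isCompact_feasiblePriors (hp0 : 0 < p) (hp1 : p < 1) (hQ : 0 < Q) :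
    IsCompact (feasiblePriors p Q) := by
  refine (isCompact_Icc (a := 0) (b := (p ^ (1 - 1 / Q), (1 - p) ^ (1 - 1 / Q)))).of_isClosed_subset
    ?_ fun q hq => ⟨Prod.le_def.2 ⟨hq.1, hq.2.1⟩, Prod.le_def.2
      ⟨fst_le_of_mem_feasiblePriors hp0 hp1.le hQ hq,
        snd_le_of_mem_feasiblePriors hp0.le hp1 hQ hq⟩⟩
  exact (isClosed_le continuous_const continuous_fst).inter
    ((isClosed_le continuous_const continuous_snd).inter
      (isClosed_le (((continuous_weightedPow hQ.le).comp continuous_fst).add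
        ((continuous_weightedPow hQ.le).comp continuous_snd)) continuous_const))

lemma mk_hAdj_mem_feasiblePriors (hp0 : 0 < p) (hp1 : p < 1) (hQ : 0 < Q) {x : ℝ} (hx₀ : 0 ≤ x)
    (hx₁ : x ≤ p ^ (1 - 1 / Q)) : (x, hAdj p Q x) ∈ feasiblePriors p Q := by
  have h := (weightedPow_le_one_iff hp0 hQ hx₀).2 hx₁
  exact ⟨hx₀, hAdj_nonneg hp0 hp1 hx₀ h, (weightedPow_add_weightedPow_hAdj hp0 hp1 hQ.ne' hx₀ h).le⟩

lemma snd_le_hAdj_of_mem_feasiblePriors (hp0 : 0 < p) (hp1 : p < 1) (hQ : 0 < Q) {q : ℝ × ℝ}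
    (hq : q ∈ feasiblePriors p Q) : q.2 ≤ hAdj p Q q.1 := by
  obtain ⟨h₁, h₂, h⟩ := hq
  have h₁' : weightedPow p Q q.1 ≤ 1 := by
    linarith [weightedPow_nonneg (Q := Q) (sub_pos.2 hp1).le h₂]
  rw [← weightedPow_le_weightedPow_iff (sub_pos.2 hp1) hQ h₂ (hAdj_nonneg hp0 hp1 h₁ h₁'),
    weightedPow_hAdj hp0 hp1 hQ.ne' h₁ h₁']
  linarith

end feasiblePriors

lemma exists_isGreatest_Gfun_hAdj {d : ℕ} {T γ p Q : ℝ} (ϑb ϑl : Fin d → ℝ) (hT : 0 < T)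
    (hγ : 0 ≤ γ) (hp0 : 0 < p) (hp1 : p < 1) (hQ : 0 < Q) :
    ∃ a, 0 ≤ a ∧ a ≤ p ^ (1 - 1 / Q) ∧
      IsGreatest {r | ∃ q₁ q₂ : ℝ, 0 ≤ q₁ ∧ 0 ≤ q₂ ∧
          weightedPow p Q q₁ + weightedPow (1 - p) Q q₂ ≤ 1 ∧ r = Gfun d T γ ϑb ϑl q₁ q₂}
        (Gfun d T γ ϑb ϑl a (hAdj p Q a)) ∧
      IsGreatest {r | ∃ q₁ : ℝ, 0 ≤ q₁ ∧ q₁ ≤ p ^ (1 - 1 / Q) ∧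
          r = Gfun d T γ ϑb ϑl q₁ (hAdj p Q q₁)}
        (Gfun d T γ ϑb ϑl a (hAdj p Q a)) := by
  obtain ⟨q, hq, hmax⟩ := (isCompact_feasiblePriors hp0 hp1 hQ).exists_isMaxOn
    ⟨0, le_rfl, le_rfl, by simp [weightedPow, zero_rpow hQ.ne']⟩
    (continuous_Gfun ϑb ϑl hT hγ).continuousOn
  have ha := fst_le_of_mem_feasiblePriors hp0 hp1.le hQ hq
  have hbound : ∀ q' ∈ feasiblePriors p Q,
      Gfun d T γ ϑb ϑl q'.1 q'.2 ≤ Gfun d T γ ϑb ϑl q.1 (hAdj p Q q.1) := fun q' hq' =>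
    (hmax hq').trans (Gfun_mono_right ϑb ϑl hT hγ hq.1 hq.2.1
      (snd_le_hAdj_of_mem_feasiblePriors hp0 hp1 hQ hq))
  obtain ⟨-, hh₀, hh⟩ := mk_hAdj_mem_feasiblePriors hp0 hp1 hQ hq.1 ha
  refine ⟨q.1, hq.1, ha, ⟨⟨q.1, _, hq.1, hh₀, hh, rfl⟩, ?_⟩, ⟨⟨q.1, hq.1, ha, rfl⟩, ?_⟩⟩
  · rintro r ⟨q₁, q₂, h₁, h₂, h, rfl⟩
    exact hbound (q₁, q₂) ⟨h₁, h₂, h⟩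
  · rintro r ⟨x, hx₀, hx₁, rfl⟩
    exact hbound _ (mk_hAdj_mem_feasiblePriors hp0 hp1 hQ hx₀ hx₁)

theorem stmt_16_general (d : ℕ) (T : ℝ) (hT : 0 < T) (γ : ℝ) (hγ : 0 < γ)
    (ϑb ϑl : Fin d → ℝ) (p : ℝ) (hp0 : 0 < p) (hp1 : p < 1)
    (P Q : ℝ) (hP : 1 < P) (hPQ : 1 / P + 1 / Q = 1) :
    (∀ q₁ q₂ : ℝ, 0 ≤ q₁ → 0 ≤ q₂ →
        (q₁ / p) ^ Q * p + (q₂ / (1 - p)) ^ Q * (1 - p) ≤ 1 → q₁ ≤ p ^ (1 / P)) ∧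
    sSup {r : ℝ | ∃ q₁ q₂ : ℝ, 0 ≤ q₁ ∧ 0 ≤ q₂ ∧
          (q₁ / p) ^ Q * p + (q₂ / (1 - p)) ^ Q * (1 - p) ≤ 1 ∧
          r = Gfun d T γ ϑb ϑl q₁ q₂}
      = sSup {r : ℝ | ∃ q₁ : ℝ, 0 ≤ q₁ ∧ q₁ ≤ p ^ (1 / P) ∧
          r = Gfun d T γ ϑb ϑl q₁ (hAdj p Q q₁)} ∧
    ∃ q₁star : ℝ, 0 ≤ q₁star ∧ q₁star ≤ p ^ (1 / P) ∧
      IsGreatest {r : ℝ | ∃ q₁ q₂ : ℝ, 0 ≤ q₁ ∧ 0 ≤ q₂ ∧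
          (q₁ / p) ^ Q * p + (q₂ / (1 - p)) ^ Q * (1 - p) ≤ 1 ∧
          r = Gfun d T γ ϑb ϑl q₁ q₂}
        (Gfun d T γ ϑb ϑl q₁star (hAdj p Q q₁star)) ∧
      (q₁star / p) ^ Q * p + (hAdj p Q q₁star / (1 - p)) ^ Q * (1 - p) = 1 := by
  have hQ : 0 < Q := one_div_pos.1 (by linarith [(div_lt_one (by linarith : (0 : ℝ) < P)).2 hP])
  rw [show 1 / P = 1 - 1 / Q by linarith]
  obtain ⟨a, ha₀, ha₁, hfeas, hcurve⟩ := exists_isGreatest_Gfun_hAdj ϑb ϑl hT hγ.le hp0 hp1 hQ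
  exact ⟨fun q₁ q₂ h₁ h₂ h =>
      fst_le_of_mem_feasiblePriors hp0 hp1.le hQ (q := (q₁, q₂)) ⟨h₁, h₂, h⟩,
    hfeas.csSup_eq.trans hcurve.csSup_eq.symm, a, ha₀, ha₁, hfeas,
    weightedPow_add_weightedPow_hAdj hp0 hp1 hQ.ne' ha₀ ((weightedPow_le_one_iff hp0 hQ ha₀).2 ha₁)⟩

/-- Adjusted-prior optimization in the ambiguity-loving case `P = λ/α > 1` (conjugate `Q`):
every feasible `(q₁, q₂)` has `q₁ ≤ p^{1/P}`, the supremum of `G` over the feasible set equals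
the supremum of `q₁ ↦ G(q₁, h(q₁))` over `[0, p^{1/P}]`, and there is `q₁* ∈ [0, p^{1/P}]`
such that `(q₁*, h(q₁*))` attains the supremum, the constraint holding there with equality. -/
theorem stmt_16 (d : ℕ) (hd : 1 ≤ d) (T : ℝ) (hT : 0 < T) (γ : ℝ) (hγ : 0 < γ)
    (ϑb ϑl : Fin d → ℝ) (p : ℝ) (hp0 : 0 < p) (hp1 : p < 1)
    (P Q : ℝ) (hP : 1 < P) (hPQ : 1 / P + 1 / Q = 1) :
    (∀ q₁ q₂ : ℝ, 0 ≤ q₁ → 0 ≤ q₂ →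
        (q₁ / p) ^ Q * p + (q₂ / (1 - p)) ^ Q * (1 - p) ≤ 1 → q₁ ≤ p ^ (1 / P)) ∧
    sSup {r : ℝ | ∃ q₁ q₂ : ℝ, 0 ≤ q₁ ∧ 0 ≤ q₂ ∧
          (q₁ / p) ^ Q * p + (q₂ / (1 - p)) ^ Q * (1 - p) ≤ 1 ∧
          r = Gfun d T γ ϑb ϑl q₁ q₂}
      = sSup {r : ℝ | ∃ q₁ : ℝ, 0 ≤ q₁ ∧ q₁ ≤ p ^ (1 / P) ∧
          r = Gfun d T γ ϑb ϑl q₁ (hAdj p Q q₁)} ∧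
    ∃ q₁star : ℝ, 0 ≤ q₁star ∧ q₁star ≤ p ^ (1 / P) ∧
      IsGreatest {r : ℝ | ∃ q₁ q₂ : ℝ, 0 ≤ q₁ ∧ 0 ≤ q₂ ∧
          (q₁ / p) ^ Q * p + (q₂ / (1 - p)) ^ Q * (1 - p) ≤ 1 ∧
          r = Gfun d T γ ϑb ϑl q₁ q₂}
        (Gfun d T γ ϑb ϑl q₁star (hAdj p Q q₁star)) ∧
      (q₁star / p) ^ Q * p + (hAdj p Q q₁star / (1 - p)) ^ Q * (1 - p) = 1 :=
  stmt_16_general d T hT γ hγ ϑb ϑl p hp0 hp1 P Q hP hPQ
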